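/- Let S be an interlaced collection of pairwise disjoint chains containing at least two chains. Then the chain of S containing the largest of all entries has at least two entries, and the chain of S containing the smallest of all entries has at least two entries. (In particular, neither the global maximum nor the global minimum of the entries can lie in a singleton chain.) -/

import Mathlib

/-!
A singleton `{a}` can only be linked to a chain with entries on both sides of `a`. Since the
collection has a second chain, interlacing forces `{a}` to be linked to some chain, so `a` is
neither the largest nor the smallest entry.
-/

/-- The maximum entry of a finite set of integers (`0` for the empty set). -/
def fmax (C : Finset ℤ) : ℤ := WithBot.unbotD 0 C.max

/-- The minimum entry of a finite set of integers (`0` for the empty set). -/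
def fmin (C : Finset ℤ) : ℤ := WithTop.untopD 0 C.min

/-- A *chain* is a nonempty set of integers of the form `{c, c-2, …, c-2k}`. -/
def IsChainSet (C : Finset ℤ) : Prop :=
  ∃ (c : ℤ) (k : ℕ), C = (Finset.range (k + 1)).image (fun i : ℕ => c - 2 * (i : ℤ))

/-- Two chains with disjoint entries, with maxima `A, B` and minima `a, b`, are *linked*
if `A > B > a` or `B > A > b`. -/
def LinkedChains (C D : Finset ℤ) : Prop :=
  Disjoint C D ∧
    ((fmax D < fmax C ∧ fmin C < fmax D) ∨ (fmax C < fmax D ∧ fmin D < fmax C))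

/-- The set of all entries of a collection of chains. -/
def entriesOf (S : Finset (Finset ℤ)) : Finset ℤ := S.biUnion id

/-- A finite collection of pairwise disjoint chains. -/
def IsChainCollection (S : Finset (Finset ℤ)) : Prop :=
  (∀ C ∈ S, IsChainSet C) ∧ ∀ C ∈ S, ∀ D ∈ S, C ≠ D → Disjoint C D

/-- A collection of pairwise disjoint chains is *interlaced* if any two of its chains are
joined by a finite sequence of chains of the collection in which consecutive chains are
linked. -/
def Interlaced (S : Finset (Finset ℤ)) : Prop :=
  ∀ C ∈ S, ∀ D ∈ S,
    Relation.ReflTransGen (fun X Y => X ∈ S ∧ Y ∈ S ∧ LinkedChains X Y) C D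

/-- An *admissible configuration of size `n`*: an interlaced collection of pairwise disjoint
chains of positive integers with `n` entries in total and smallest entry equal to `1`. -/
def AdmissibleConfig (n : ℕ) (S : Finset (Finset ℤ)) : Prop :=
  IsChainCollection S ∧ Interlaced S ∧ (entriesOf S).card = n ∧
    (∀ x ∈ entriesOf S, 0 < x) ∧ (1 : ℤ) ∈ entriesOf S

lemma le_fmax {C : Finset ℤ} {a : ℤ} (h : a ∈ C) : a ≤ fmax C := by
  obtain ⟨x, hx⟩ := Finset.max_of_mem h
  simpa [fmax, hx] using Finset.le_max_of_eq h hx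

lemma fmin_le {C : Finset ℤ} {a : ℤ} (h : a ∈ C) : fmin C ≤ a := by
  obtain ⟨x, hx⟩ := Finset.min_of_mem h
  simpa [fmin, hx] using Finset.min_le_of_eq h hx

lemma fmax_mem {C : Finset ℤ} (h : C.Nonempty) : fmax C ∈ C := by
  obtain ⟨x, hx⟩ := Finset.max_of_nonempty h
  simpa [fmax, hx] using Finset.mem_of_max hx

lemma fmin_mem {C : Finset ℤ} (h : C.Nonempty) : fmin C ∈ C := by
  obtain ⟨x, hx⟩ := Finset.min_of_nonempty h
  simpa [fmin, hx] using Finset.mem_of_min hx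

@[simp]
lemma fmax_singleton (a : ℤ) : fmax {a} = a := by
  simp [fmax, Finset.max_singleton]

@[simp]
lemma fmin_singleton (a : ℤ) : fmin {a} = a := by
  simp [fmin, Finset.min_singleton]

lemma fmax_empty : fmax ∅ = 0 := rfl

lemma fmin_empty : fmin ∅ = 0 := rfl

lemma LinkedChains.exists_lt_and_exists_gt_of_singleton {a : ℤ} {Y : Finset ℤ}
    (h : LinkedChains {a} Y) : (∃ y ∈ Y, a < y) ∧ ∃ y ∈ Y, y < a := by
  have straddle : a < fmax Y ∧ fmin Y < a := by
    rcases h.2 with ⟨hlt, hgt⟩ | hY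
    · simp only [fmax_singleton] at hlt hgt
      exact absurd hlt hgt.not_gt
    · simpa using hY
  -- `fmax ∅ = fmin ∅ = 0`, which cannot straddle `a`
  have hY : Y.Nonempty := by
    rw [Finset.nonempty_iff_ne_empty]
    rintro rfl
    rw [fmax_empty, fmin_empty] at straddle
    exact absurd straddle.1 straddle.2.not_gt
  exact ⟨⟨_, fmax_mem hY, straddle.1⟩, ⟨_, fmin_mem hY, straddle.2⟩⟩

lemma Interlaced.exists_linkedChains {S : Finset (Finset ℤ)} (hI : Interlaced S)
    (hcard : 1 < S.card) {C : Finset ℤ} (hC : C ∈ S) : ∃ Y ∈ S, LinkedChains C Y := by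
  obtain ⟨D, hD, hDC⟩ := Finset.exists_mem_ne hcard C
  rcases (hI C hC D hD).cases_head with rfl | ⟨Y, ⟨-, hY, hlink⟩, -⟩
  · exact absurd rfl hDC
  · exact ⟨Y, hY, hlink⟩

lemma Interlaced.exists_entries_lt_and_gt_of_singleton_mem {S : Finset (Finset ℤ)}
    (hI : Interlaced S) (hcard : 1 < S.card) {a : ℤ} (ha : {a} ∈ S) :
    (∃ x ∈ entriesOf S, a < x) ∧ ∃ x ∈ entriesOf S, x < a := by
  obtain ⟨Y, hY, hlink⟩ := hI.exists_linkedChains hcard ha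
  have hsub : Y ⊆ entriesOf S := Finset.subset_biUnion_of_mem id hY
  obtain ⟨⟨y, hy, hay⟩, ⟨z, hz, hza⟩⟩ := hlink.exists_lt_and_exists_gt_of_singleton
  exact ⟨⟨y, hsub hy, hay⟩, ⟨z, hsub hz, hza⟩⟩

lemma Finset.eq_singleton_of_mem_of_card_lt_two {α : Type*} {s : Finset α} {a : α}
    (ha : a ∈ s) (hs : s.card < 2) : s = {a} :=
  Finset.eq_singleton_iff_unique_mem.2
    ⟨ha, fun _ hx => Finset.card_le_one.1 (by omega) _ hx _ ha⟩

theorem extreme_entries_not_in_singleton_general (S : Finset (Finset ℤ))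
    (hI : Interlaced S) (hcard : 2 ≤ S.card) :
    (∀ C ∈ S, fmax (entriesOf S) ∈ C → 2 ≤ C.card) ∧
    (∀ C ∈ S, fmin (entriesOf S) ∈ C → 2 ≤ C.card) := by
  constructor
  · intro C hC hmax
    by_contra! hsmall
    rw [Finset.eq_singleton_of_mem_of_card_lt_two hmax hsmall] at hC
    obtain ⟨⟨x, hx, hlt⟩, -⟩ := hI.exists_entries_lt_and_gt_of_singleton_mem hcard hC
    exact (le_fmax hx).not_gt hlt
  · intro C hC hmin
    by_contra! hsmall
    rw [Finset.eq_singleton_of_mem_of_card_lt_two hmin hsmall] at hC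
    obtain ⟨-, ⟨x, hx, hlt⟩⟩ := hI.exists_entries_lt_and_gt_of_singleton_mem hcard hC
    exact (fmin_le hx).not_gt hlt

/-- In an interlaced collection of at least two pairwise disjoint chains, the chain
containing the largest entry and the chain containing the smallest entry each have at least
two entries. -/
theorem extreme_entries_not_in_singleton (S : Finset (Finset ℤ))
    (hS : IsChainCollection S) (hI : Interlaced S) (hcard : 2 ≤ S.card) :
    (∀ C ∈ S, fmax (entriesOf S) ∈ C → 2 ≤ C.card) ∧
    (∀ C ∈ S, fmin (entriesOf S) ∈ C → 2 ≤ C.card) :=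
  extreme_entries_not_in_singleton_general S hI hcard
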